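/- If a reduced word u is left-absorbed by the concatenation v_1·v_2, then u ≈ u_1·u_2 where u_1 is left-absorbed by v_1, u_2 is left-absorbed by v_2, and u_2 commutes with v_1 (hence also with u_1). -/

import Mathlib

variable {V : Type*} [DecidableEq V] [Fintype V]

/-- A letter is a nonempty connected subset of the graph `G`
(connectedness of the induced subgraph includes nonemptiness). -/
def IsLetter (G : SimpleGraph V) (s : Finset V) : Prop :=
  (G.induce (↑s : Set V)).Connected

/-- The type of letters of `G`. -/
def Letter (G : SimpleGraph V) := {s : Finset V // IsLetter G s}

/-- A word is a finite sequence of letters. -/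
abbrev Word (G : SimpleGraph V) := List (Letter G)

/-- Two letters commute iff their union is not a letter (is disconnected). -/
def LCommute (G : SimpleGraph V) (s t : Letter G) : Prop :=
  ¬ IsLetter G (s.1 ∪ t.1)

/-- Two words commute if their letters pairwise commute. -/
def WCommute (G : SimpleGraph V) (u v : Word G) : Prop :=
  ∀ s ∈ u, ∀ t ∈ v, LCommute G s t

/-- One swap of two adjacent commuting letters. -/
def LSwapStep (G : SimpleGraph V) (w w' : Word G) : Prop :=
  ∃ (a b : Word G) (s t : Letter G), LCommute G s t ∧
    w = a ++ s :: t :: b ∧ w' = a ++ t :: s :: b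

/-- Equivalence (`≈`) of words: sequences of swaps of adjacent commuting letters. -/
def WEquiv (G : SimpleGraph V) : Word G → Word G → Prop :=
  Relation.ReflTransGen (LSwapStep G)

/-- A word is reduced if there is no pair of comparable letters such that the
smaller one commutes with all letters strictly in between. -/
def WIsReduced (G : SimpleGraph V) (w : Word G) : Prop :=
  ¬ ∃ (a b c : Word G) (s t : Letter G),
      w = a ++ s :: (b ++ t :: c) ∧
      ((s.1 ⊆ t.1 ∧ ∀ r ∈ b, LCommute G s r) ∨
       (t.1 ⊆ s.1 ∧ ∀ r ∈ b, LCommute G t r))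

/-- A splitting of a letter `s`: a (possibly empty) word whose letters are
proper subsets of `s`. -/
def IsSplitting (G : SimpleGraph V) (x : Word G) (s : Letter G) : Prop :=
  ∀ t ∈ x, t.1 ⊂ s.1

/-- `SplitStep G u v`: `u` is obtained from `v` by replacing one occurrence of a
letter by a splitting of it. -/
def SplitStep (G : SimpleGraph V) (u v : Word G) : Prop :=
  ∃ (a b x : Word G) (s : Letter G),
    v = a ++ s :: b ∧ IsSplitting G x s ∧ u = a ++ x ++ b

/-- One step of the splitting order up to equivalence. -/
def PrecStep (G : SimpleGraph V) (u v : Word G) : Prop :=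
  ∃ u' v', WEquiv G v v' ∧ SplitStep G u' v' ∧ WEquiv G u u'

/-- The splitting order `≺` on words. -/
def WPrec (G : SimpleGraph V) : Word G → Word G → Prop :=
  Relation.TransGen (PrecStep G)

/-- `u ≼ v` : `u ≺ v` or `u ≈ v`. -/
def WPreceq (G : SimpleGraph V) (u v : Word G) : Prop :=
  WPrec G u v ∨ WEquiv G u v

/-- Absorption: if `s ⊆ t`, replace a subword `s·t` (or `t·s`) by `t`. -/
def AbsorbStep (G : SimpleGraph V) (w w' : Word G) : Prop :=
  ∃ (a b : Word G) (s t : Letter G), s.1 ⊆ t.1 ∧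
    (w = a ++ s :: t :: b ∨ w = a ++ t :: s :: b) ∧ w' = a ++ t :: b

/-- A non-splitting reduction step: Commutation or Absorption. -/
def NSStep (G : SimpleGraph V) (w w' : Word G) : Prop :=
  LSwapStep G w w' ∨ AbsorbStep G w w'

/-- `NSRed G u v`: `v` is a non-splitting reduction of `u`, i.e. a reduced word
obtained from `u` by Commutation and Absorption steps only. -/
def NSRed (G : SimpleGraph V) (u v : Word G) : Prop :=
  Relation.ReflTransGen (NSStep G) u v ∧ WIsReduced G v

/-- The letter `t` is left-absorbed by the word `w`: `t` is contained in some
letter of `w` and commutes with all earlier letters. -/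
def LetterLeftAbsorbed (G : SimpleGraph V) (t : Letter G) (w : Word G) : Prop :=
  ∃ (a b : Word G) (s : Letter G), w = a ++ s :: b ∧ t.1 ⊆ s.1 ∧ ∀ r ∈ a, LCommute G t r

/-- The letter `t` is right-absorbed by the word `w`. -/
def LetterRightAbsorbed (G : SimpleGraph V) (t : Letter G) (w : Word G) : Prop :=
  ∃ (a b : Word G) (s : Letter G), w = a ++ s :: b ∧ t.1 ⊆ s.1 ∧ ∀ r ∈ b, LCommute G t r

/-- The letter `t` is properly left-absorbed by the word `w`. -/
def LetterProperLeftAbsorbed (G : SimpleGraph V) (t : Letter G) (w : Word G) : Prop :=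
  ∃ (a b : Word G) (s : Letter G), w = a ++ s :: b ∧ t.1 ⊂ s.1 ∧ ∀ r ∈ a, LCommute G t r

/-- The letter `t` is properly right-absorbed by the word `w`. -/
def LetterProperRightAbsorbed (G : SimpleGraph V) (t : Letter G) (w : Word G) : Prop :=
  ∃ (a b : Word G) (s : Letter G), w = a ++ s :: b ∧ t.1 ⊂ s.1 ∧ ∀ r ∈ b, LCommute G t r

/-- A word `u` is left-absorbed by `w` if each of its letters is. -/
def LeftAbsorbed (G : SimpleGraph V) (u w : Word G) : Prop :=
  ∀ t ∈ u, LetterLeftAbsorbed G t w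

/-- A word `u` is right-absorbed by `w` if each of its letters is. -/
def RightAbsorbed (G : SimpleGraph V) (u w : Word G) : Prop :=
  ∀ t ∈ u, LetterRightAbsorbed G t w

/-- A word `u` is properly left-absorbed by `w` if each of its letters is. -/
def ProperLeftAbsorbed (G : SimpleGraph V) (u w : Word G) : Prop :=
  ∀ t ∈ u, LetterProperLeftAbsorbed G t w

/-- A word `u` is properly right-absorbed by `w` if each of its letters is. -/
def ProperRightAbsorbed (G : SimpleGraph V) (u w : Word G) : Prop :=
  ∀ t ∈ u, LetterProperRightAbsorbed G t w

/-- A commuting word: its letters pairwise commute. -/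
def IsCommuting (G : SimpleGraph V) (u : Word G) : Prop :=
  List.Pairwise (LCommute G) u

/-- The letter `s` is an end of the word `u` if `u ≈ v·s` for some `v`. -/
def IsEnd (G : SimpleGraph V) (s : Letter G) (u : Word G) : Prop :=
  ∃ v, WEquiv G u (v ++ [s])

/-- `t` is the final segment of `u`: the commuting word consisting of all ends of `u`. -/
def IsFinalSegment (G : SimpleGraph V) (t u : Word G) : Prop :=
  IsCommuting G t ∧ ∀ s, s ∈ t ↔ IsEnd G s u

/-!
Induct on `u`. Each letter `t` of `u` is absorbed either into `v₁`, or into `v₂` while commuting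
with all of `v₁`. Commuting passes to subletters (if `c ⊆ s` and `c ∪ r` is connected, so is
`s ∪ r`), so a letter commuting with `v₁` commutes with every letter absorbed into `v₁`. Hence in
the second case `t` commutes with `u₁` and can be moved past it to the front of `u₂`.
-/

section

omit [Fintype V]

variable {G : SimpleGraph V}

theorem IsLetter.union_of_subset {s c t : Finset V} (hs : IsLetter G s) (hc : IsLetter G c)
    (hcs : c ⊆ s) (hct : IsLetter G (c ∪ t)) : IsLetter G (s ∪ t) := by
  obtain ⟨⟨x, hx⟩⟩ := SimpleGraph.Connected.nonempty hc
  have hcs' : (c : Set V) ⊆ s := by exact_mod_cast hcs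
  have hst : ((s ∪ t : Finset V) : Set V) = (s : Set V) ∪ ((c ∪ t : Finset V) : Set V) := by
    push_cast
    rw [← Set.union_assoc, Set.union_eq_left.mpr hcs']
  show (G.induce _).Connected
  rw [hst]
  exact SimpleGraph.induce_union_connected hs.preconnected hct.preconnected
    ⟨x, hcs' hx, by simp [hx]⟩

theorem LCommute.symm {s t : Letter G} (h : LCommute G s t) : LCommute G t s := by
  rwa [LCommute, Finset.union_comm]

theorem LCommute.of_subset_left {s t c : Letter G} (h : LCommute G s t) (hcs : c.1 ⊆ s.1) :
    LCommute G c t :=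
  fun hct => h (s.2.union_of_subset c.2 hcs hct)

theorem LCommute.of_subset_right {r s c : Letter G} (h : LCommute G r s) (hcs : c.1 ⊆ s.1) :
    LCommute G r c :=
  (h.symm.of_subset_left hcs).symm

theorem LSwapStep.cons {u v : Word G} (t : Letter G) (h : LSwapStep G u v) :
    LSwapStep G (t :: u) (t :: v) := by
  obtain ⟨a, b, s, r, hsr, rfl, rfl⟩ := h
  exact ⟨t :: a, b, s, r, hsr, rfl, rfl⟩

theorem WEquiv.cons {u v : Word G} (t : Letter G) (h : WEquiv G u v) :
    WEquiv G (t :: u) (t :: v) :=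
  h.lift (t :: ·) fun _ _ => LSwapStep.cons t

theorem wEquiv_cons_append_of_forall_lcommute {t : Letter G} {a : Word G} (b : Word G)
    (ha : ∀ r ∈ a, LCommute G t r) : WEquiv G (t :: (a ++ b)) (a ++ t :: b) := by
  induction a with
  | nil => exact .refl
  | cons r a ih =>
    have hswap : LSwapStep G (t :: r :: (a ++ b)) (r :: t :: (a ++ b)) :=
      ⟨[], a ++ b, t, r, ha r List.mem_cons_self, rfl, rfl⟩
    exact .head hswap ((ih fun x hx => ha x (List.mem_cons_of_mem r hx)).cons r)

theorem LetterLeftAbsorbed.lcommute {r t : Letter G} {v : Word G}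
    (ht : LetterLeftAbsorbed G t v) (hr : ∀ s ∈ v, LCommute G r s) : LCommute G r t := by
  obtain ⟨a, b, s, rfl, hts, -⟩ := ht
  exact (hr s (by simp)).of_subset_right hts

theorem letterLeftAbsorbed_append_iff {t : Letter G} {v₁ v₂ : Word G} :
    LetterLeftAbsorbed G t (v₁ ++ v₂) ↔
      LetterLeftAbsorbed G t v₁ ∨ LetterLeftAbsorbed G t v₂ ∧ ∀ r ∈ v₁, LCommute G t r := by
  constructor
  · rintro ⟨a, b, s, hab, hts, ha⟩
    rcases List.append_eq_append_iff.mp hab with ⟨w, rfl, hw⟩ | ⟨_ | ⟨x, w⟩, rfl, hw⟩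
    · exact .inr ⟨⟨w, b, s, hw, hts, fun r hr => ha r (by simp [hr])⟩,
        fun r hr => ha r (by simp [hr])⟩
    · exact .inr ⟨⟨[], b, s, by simpa using hw.symm, hts, by simp⟩, by simpa using ha⟩
    · obtain ⟨rfl, rfl⟩ := List.cons_eq_cons.mp hw
      exact .inl ⟨a, w, s, rfl, hts, ha⟩
  · rintro (⟨a, b, s, rfl, hts, ha⟩ | ⟨⟨a, b, s, rfl, hts, ha⟩, hv₁⟩)
    · exact ⟨a, b ++ v₂, s, by simp, hts, ha⟩
    · refine ⟨v₁ ++ a, b, s, by simp, hts, fun r hr => ?_⟩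
      rcases List.mem_append.mp hr with hr | hr
      exacts [hv₁ r hr, ha r hr]

theorem leftAbsorbed_cons {t : Letter G} {u w : Word G} :
    LeftAbsorbed G (t :: u) w ↔ LetterLeftAbsorbed G t w ∧ LeftAbsorbed G u w :=
  List.forall_mem_cons

theorem wCommute_cons_left {t : Letter G} {u v : Word G} :
    WCommute G (t :: u) v ↔ (∀ s ∈ v, LCommute G t s) ∧ WCommute G u v :=
  List.forall_mem_cons

theorem wCommute_cons_right {t : Letter G} {u v : Word G} :
    WCommute G u (t :: v) ↔ (∀ r ∈ u, LCommute G r t) ∧ WCommute G u v := by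
  simp only [WCommute, List.forall_mem_cons, forall_and]

end

theorem leftAbsorbed_append_decomp_general (G : SimpleGraph V) (u v1 v2 : Word G)
    (h : LeftAbsorbed G u (v1 ++ v2)) :
    ∃ u1 u2 : Word G, WEquiv G u (u1 ++ u2) ∧
      LeftAbsorbed G u1 v1 ∧ LeftAbsorbed G u2 v2 ∧
      WCommute G u2 v1 ∧ WCommute G u2 u1 := by
  induction u with
  | nil => exact ⟨[], [], .refl, by simp [LeftAbsorbed, WCommute]⟩
  | cons t u ih =>
    obtain ⟨ht, hu⟩ := leftAbsorbed_cons.mp h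
    obtain ⟨u1, u2, he, h1, h2, hc1, hc2⟩ := ih hu
    rcases letterLeftAbsorbed_append_iff.mp ht with ht1 | ⟨ht2, htv1⟩
    · refine ⟨t :: u1, u2, he.cons t, leftAbsorbed_cons.mpr ⟨ht1, h1⟩, h2, hc1, ?_⟩
      exact wCommute_cons_right.mpr ⟨fun r hr => ht1.lcommute (hc1 r hr), hc2⟩
    · have htu1 : ∀ r ∈ u1, LCommute G t r := fun r hr => (h1 r hr).lcommute htv1
      exact ⟨u1, t :: u2, (he.cons t).trans (wEquiv_cons_append_of_forall_lcommute u2 htu1), h1,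
        leftAbsorbed_cons.mpr ⟨ht2, h2⟩, wCommute_cons_left.mpr ⟨htv1, hc1⟩,
        wCommute_cons_left.mpr ⟨htu1, hc2⟩⟩

/-- If a reduced word `u` is left-absorbed by `v₁·v₂`, then `u ≈ u₁·u₂` where
`u₁` is left-absorbed by `v₁`, `u₂` is left-absorbed by `v₂`, and `u₂`
commutes with `v₁` (hence also with `u₁`). -/
theorem leftAbsorbed_append_decomp (G : SimpleGraph V) (u v1 v2 : Word G)
    (hu : WIsReduced G u) (h : LeftAbsorbed G u (v1 ++ v2)) :
    ∃ u1 u2 : Word G, WEquiv G u (u1 ++ u2) ∧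
      LeftAbsorbed G u1 v1 ∧ LeftAbsorbed G u2 v2 ∧
      WCommute G u2 v1 ∧ WCommute G u2 u1 :=
  leftAbsorbed_append_decomp_general G u v1 v2 h
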